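/- Let ψ be a species tree topology on X with |X| = n ≥ 3, let v be an internal node of ψ both of whose children are leaves, let y ∈ Y_ψ, let w be the ⪰-minimal element of {i ∈ I_ψ : i ⪰ v and y(i) > 0}, and let ψ̃ (on X minus one leaf child a of v, with I_{ψ̃} = I_ψ ∖ {v} and ancestry the restriction of that of ψ) and ỹ be as in the pruning construction (ỹ(w) = y(w) − 1 if w ≠ v, ỹ(i) = y(i) otherwise). Suppose h̃ : I_{ψ̃} → I_{ψ̃} satisfies h̃(i) ⪰ i for every i ∈ I_{ψ̃}, h̃(i) ⪰ h̃(j) whenever i ⪰ j in ψ̃, and |h̃⁻¹(i)| = ỹ(i) for every i ∈ I_{ψ̃}. Define h : I_ψ → I_ψ by h(v) = w and h(i) = h̃(i) for i ∈ I_ψ ∖ {v}. Then h(i) ⪰ i in ψ for every i ∈ I_ψ, h(i) ⪰ h(j) in ψ whenever i ⪰ j in ψ, and |h⁻¹(i)| = y(i) for every i ∈ I_ψ; that is, h is a coalescent history for the matching gene tree of ψ with Φ_{ψ,T_M}(h) = y. -/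
import Mathlib


/-!
Rooted binary trees with leaves labeled by elements of a finite label set.
Each node of a tree is identified with the subtree rooted at it; since leaf
labels are required to be distinct, this identification is faithful.
-/

inductive RBT (α : Type) where
  | leaf (x : α)
  | node (l r : RBT α)
deriving DecidableEq

namespace RBT

variable {α : Type} [DecidableEq α]

/-- The list of leaf labels, left to right. -/
def leafList : RBT α → List α
  | leaf x => [x]
  | node l r => l.leafList ++ r.leafList

/-- The clade of a node: the set of labels of leaves descended from or equal to it. -/
def clade (t : RBT α) : Finset α := t.leafList.toFinset

/-- `t` is a rooted binary tree on the label set `X`: its leaf labels are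
distinct and form exactly the set `X`. -/
def IsTreeOn (t : RBT α) (X : Finset α) : Prop :=
  t.leafList.Nodup ∧ t.clade = X

/-- All nodes of a tree, each identified with the subtree rooted at it. -/
def subtrees : RBT α → Finset (RBT α)
  | leaf x => {leaf x}
  | node l r => insert (node l r) (subtrees l ∪ subtrees r)

/-- `Anc i j` means node `i` is ancestral to or equal to node `j`, i.e. `i ⪰ j`. -/
def Anc (i j : RBT α) : Prop := j ∈ i.subtrees

instance (i j : RBT α) : Decidable (Anc i j) :=
  inferInstanceAs (Decidable (j ∈ i.subtrees))

/-- Whether a node is internal (a non-leaf). -/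
def isInternal : RBT α → Bool
  | leaf _ => false
  | node _ _ => true

/-- The internal nodes of a tree. -/
def internals (t : RBT α) : Finset (RBT α) :=
  t.subtrees.filter fun s => s.isInternal = true

/-- A coalescent history for a gene tree `T` relative to a species tree
topology `ψ`: a map `h : I_T → I_ψ` such that the clade of `j` is contained in
the clade of `h j` for every internal node `j` of `T`, and `h i ⪰ h j` in `ψ`
whenever `i ⪰ j` in `T`. -/
def IsCoalHistory (ψ T : RBT α) (h : ↥T.internals → ↥ψ.internals) : Prop :=
  (∀ j : ↥T.internals, (j : RBT α).clade ⊆ ((h j : RBT α)).clade) ∧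
  ∀ i j : ↥T.internals, Anc (i : RBT α) (j : RBT α) →
    Anc (h i : RBT α) ((h j : RBT α))

/-- The set `H_{ψ,T}` of coalescent histories for `T` relative to `ψ`. -/
def coalHistories (ψ T : RBT α) : Set (↥T.internals → ↥ψ.internals) :=
  {h | IsCoalHistory ψ T h}

/-- The map `Φ_{ψ,T}`: from a coalescent history, record only the number of
coalescent events `|h⁻¹(i)|` occurring at each internal node `i` of `ψ`. -/
def Phi (ψ T : RBT α) (h : ↥T.internals → ↥ψ.internals) : ↥ψ.internals → ℕ :=
  fun i => (Finset.univ.filter fun j : ↥T.internals => h j = i).card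

/-- A population history for `ψ`, where `n` is the number of taxa: a map
`y : I_ψ → ℕ` with total sum `n - 1` such that, for every internal node `i`,
the sum of `y` over internal nodes `j` with `i ⪰ j` is at most `ℓ_i - 1`. -/
def IsPopHistory (ψ : RBT α) (n : ℕ) (y : ↥ψ.internals → ℕ) : Prop :=
  (∑ i : ↥ψ.internals, y i = n - 1) ∧
  ∀ i : ↥ψ.internals,
    (∑ j ∈ Finset.univ.filter
        (fun j : ↥ψ.internals => Anc (i : RBT α) (j : RBT α)), y j)
      ≤ (i : RBT α).clade.card - 1

/-- The set `Y_ψ` of population histories for `ψ` on `n` taxa. -/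
def popHistories (ψ : RBT α) (n : ℕ) : Set (↥ψ.internals → ℕ) :=
  {y | IsPopHistory ψ n y}

/-- A caterpillar: a rooted binary tree whose internal nodes are totally
ordered by the ancestry relation. -/
def IsCaterpillar (T : RBT α) : Prop :=
  ∀ i ∈ T.internals, ∀ j ∈ T.internals, Anc i j ∨ Anc j i

/-- The set of clades of a tree. -/
def cladeSet (t : RBT α) : Set (Finset α) :=
  {s | ∃ v ∈ t.subtrees, v.clade = s}

end RBT

set_option linter.unusedSectionVars false

namespace RBT
variable {α : Type} [DecidableEq α]

theorem mem_subtrees_self' (t : RBT α) : t ∈ t.subtrees := by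
  cases t <;> simp [subtrees]

theorem leafList_ne_nil' (t : RBT α) : t.leafList ≠ [] := by
  induction t with
  | leaf x => simp [leafList]
  | node l r ihl ihr => simp [leafList, ihl]

theorem anc_trans' : ∀ {i j k : RBT α}, j ∈ i.subtrees → k ∈ j.subtrees → k ∈ i.subtrees := by
  intro i
  induction i with
  | leaf x =>
    intro j k hj hk
    simp [subtrees] at hj
    subst hj; exact hk
  | node l r ihl ihr =>
    intro j k hj hk
    simp [subtrees] at hj ⊢
    rcases hj with hj | hj | hj
    · subst hj; simpa [subtrees] using hk
    · exact Or.inr (Or.inl (ihl hj hk))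
    · exact Or.inr (Or.inr (ihr hj hk))

theorem subtrees_sublist' : ∀ {i j : RBT α}, j ∈ i.subtrees → j.leafList.Sublist i.leafList := by
  intro i
  induction i with
  | leaf x =>
    intro j hj
    simp [subtrees] at hj; subst hj; exact List.Sublist.refl _
  | node l r ihl ihr =>
    intro j hj
    simp [subtrees] at hj
    rcases hj with hj | hj | hj
    · subst hj; exact List.Sublist.refl _
    · exact (ihl hj).trans (List.sublist_append_left _ _)
    · exact (ihr hj).trans (List.sublist_append_right _ _)

theorem subtrees_length' : ∀ {i j : RBT α}, j ∈ i.subtrees →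
    i = j ∨ j.leafList.length < i.leafList.length := by
  intro i
  induction i with
  | leaf x =>
    intro j hj; simp [subtrees] at hj; exact Or.inl hj.symm
  | node l r ihl ihr =>
    intro j hj
    simp [subtrees] at hj
    rcases hj with hj | hj | hj
    · exact Or.inl hj.symm
    · right
      have := (subtrees_sublist' hj).length_le
      have hr : 0 < r.leafList.length := List.length_pos_iff.mpr (leafList_ne_nil' r)
      simp [leafList]; omega
    · right
      have := (subtrees_sublist' hj).length_le
      have hl : 0 < l.leafList.length := List.length_pos_iff.mpr (leafList_ne_nil' l)
      simp [leafList]; omega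

theorem anc_antisymm' {i j : RBT α} (h1 : j ∈ i.subtrees) (h2 : i ∈ j.subtrees) : i = j := by
  rcases subtrees_length' h1 with h | h
  · exact h
  · rcases subtrees_length' h2 with h' | h'
    · exact h'.symm
    · omega

theorem clade_subset' {i j : RBT α} (h : j ∈ i.subtrees) : j.clade ⊆ i.clade := by
  intro x hx
  simp only [clade, List.mem_toFinset] at hx ⊢
  exact (subtrees_sublist' h).subset hx

theorem internal_of_mem {t : RBT α} (i : ↥t.internals) : (i : RBT α).isInternal = true :=
  (Finset.mem_filter.mp i.property).2

theorem mem_tree_of_mem {t : RBT α} (i : ↥t.internals) : (i : RBT α) ∈ t.subtrees :=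
  (Finset.mem_filter.mp i.property).1

end RBT

/-- In the pruning construction (with `ψ` on `X`, `|X| = n ≥ 3`,
`v = (a,b)` a cherry of `ψ`, `y ∈ Y_ψ`, `w` the `⪰`-minimal element of
`A = {i ∈ I_ψ : i ⪰ v, y i > 0}`, and `ỹ` as in Statement 11): if
`h̃ : I_ψ \ {v} → I_ψ \ {v}` (via the identification `I_{ψ̃} = I_ψ \ {v}`)
satisfies `h̃ i ⪰ i`, is ancestry-monotone, and has `|h̃⁻¹(i)| = ỹ i` for all
`i`, then the extension `h` with `h v = w` and `h i = h̃ i` otherwise satisfies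
`h i ⪰ i` for all `i ∈ I_ψ`, is ancestry-monotone, and has `|h⁻¹(i)| = y i`
for all `i ∈ I_ψ`; that is, `h` is a coalescent history for the matching gene
tree of `ψ` with `Φ_{ψ,T_M}(h) = y`. -/
theorem prune_history_extension
    {α : Type} [DecidableEq α] (X : Finset α) (n : ℕ)
    (hn : X.card = n) (h3 : 3 ≤ n)
    (ψ : RBT α) (hψ : ψ.IsTreeOn X)
    (a b : α) (v : RBT α) (hv : v = RBT.node (RBT.leaf a) (RBT.leaf b))
    (hvmem : v ∈ ψ.internals)
    (y : ↥ψ.internals → ℕ) (hy : RBT.IsPopHistory ψ n y)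
    (w : ↥ψ.internals)
    (hwA : RBT.Anc (w : RBT α) v ∧ 0 < y w)
    (hwmin : ∀ i : ↥ψ.internals, RBT.Anc (i : RBT α) v → 0 < y i →
      RBT.Anc (i : RBT α) (w : RBT α))
    (ht : ↥ψ.internals → ↥ψ.internals)
    (ht_ne : ∀ i : ↥ψ.internals, (i : RBT α) ≠ v → (ht i : RBT α) ≠ v)
    (ht_anc : ∀ i : ↥ψ.internals, (i : RBT α) ≠ v →
      RBT.Anc (ht i : RBT α) (i : RBT α))
    (ht_mono : ∀ i j : ↥ψ.internals, (i : RBT α) ≠ v → (j : RBT α) ≠ v →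
      RBT.Anc (i : RBT α) (j : RBT α) → RBT.Anc (ht i : RBT α) (ht j : RBT α))
    (ht_count : ∀ i : ↥ψ.internals, (i : RBT α) ≠ v →
      (Finset.univ.filter fun j : ↥ψ.internals =>
          (j : RBT α) ≠ v ∧ ht j = i).card
        = (if i = w then y i - 1 else y i))
    (h : ↥ψ.internals → ↥ψ.internals)
    (hdef : h = fun (i : ↥ψ.internals) => if (i : RBT α) = v then w else ht i) :
    (∀ i : ↥ψ.internals, RBT.Anc (h i : RBT α) (i : RBT α)) ∧
    (∀ i j : ↥ψ.internals, RBT.Anc (i : RBT α) (j : RBT α) →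
      RBT.Anc (h i : RBT α) (h j : RBT α)) ∧
    h ∈ RBT.coalHistories ψ ψ ∧
    RBT.Phi ψ ψ h = y := by
  obtain ⟨hwv, hyw⟩ := hwA
  obtain ⟨hnodup, hclX⟩ := hψ
  subst hdef
  set vv : ↥ψ.internals := ⟨v, hvmem⟩ with hvvdef
  -- internal nodes ancestral-to-or-below v are just v itself
  have hbelow : ∀ j : ↥ψ.internals, RBT.Anc v (j : RBT α) → (j : RBT α) = v := by
    intro j hj
    have hint := RBT.internal_of_mem j
    rw [hv] at hj
    simp only [RBT.Anc, RBT.subtrees, Finset.mem_insert, Finset.mem_union,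
      Finset.mem_singleton] at hj
    rcases hj with hj | hj | hj
    · rw [hj, hv]
    · rw [hj] at hint; simp [RBT.isInternal] at hint
    · rw [hj] at hint; simp [RBT.isInternal] at hint
  -- claim 1 : h i ⪰ i
  have C1 : ∀ i : ↥ψ.internals,
      RBT.Anc (((if (i : RBT α) = v then w else ht i) : ↥ψ.internals) : RBT α) (i : RBT α) := by
    intro i
    by_cases hiv : (i : RBT α) = v
    · rw [if_pos hiv, hiv]; exact hwv
    · rw [if_neg hiv]; exact ht_anc i hiv
  -- claim 2 : monotonicity
  have C2 : ∀ i j : ↥ψ.internals, RBT.Anc (i : RBT α) (j : RBT α) →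
      RBT.Anc (((if (i : RBT α) = v then w else ht i) : ↥ψ.internals) : RBT α)
        (((if (j : RBT α) = v then w else ht j) : ↥ψ.internals) : RBT α) := by
    intro i j hij
    by_cases hiv : (i : RBT α) = v
    · have hjv : (j : RBT α) = v := hbelow j (hiv ▸ hij)
      rw [if_pos hiv, if_pos hjv]
      exact RBT.mem_subtrees_self' _
    · rw [if_neg hiv]
      by_cases hjv : (j : RBT α) = v
      · rw [if_pos hjv]
        -- need Anc (ht i) w
        have h1 : RBT.Anc ((ht i : RBT α)) v :=
          RBT.anc_trans' (ht_anc i hiv) (hjv ▸ hij)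
        by_cases hw : ht i = w
        · rw [hw]; exact RBT.mem_subtrees_self' _
        · have hpos : 0 < y (ht i) := by
            have hc := ht_count (ht i) (ht_ne i hiv)
            rw [if_neg hw] at hc
            rw [← hc]
            apply Finset.card_pos.mpr
            exact ⟨i, by simp [hiv]⟩
          exact hwmin (ht i) h1 hpos
      · rw [if_neg hjv]
        exact ht_mono i j hiv hjv hij
  refine ⟨C1, C2, ⟨fun j => RBT.clade_subset' (C1 j), C2⟩, ?_⟩
  -- Phi = y
  have hwv' : RBT.Anc (w : RBT α) v := hwv
  funext i
  show (Finset.univ.filter fun j : ↥ψ.internals =>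
      (if (j : RBT α) = v then w else ht j) = i).card = y i
  by_cases hiw : i = w
  · subst hiw
    by_cases hwvv : (i : RBT α) = v
    · -- w is v itself; the only preimage is vv, and y v = 1
      have hfil : (Finset.univ.filter fun j : ↥ψ.internals =>
          (if (j : RBT α) = v then i else ht j) = i) = {vv} := by
        ext j
        simp only [Finset.mem_filter, Finset.mem_univ, true_and, Finset.mem_singleton]
        constructor
        · intro hj
          by_cases hjv : (j : RBT α) = v
          · exact Subtype.ext (by rw [hjv])
          · rw [if_neg hjv] at hj
            exact absurd (by rw [hj, hwvv]) (ht_ne j hjv)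
        · intro hj; subst hj; simp [vv]
      rw [hfil, Finset.card_singleton]
      -- y i ≤ 1 from the population-history constraint at vv
      have hsum := hy.2 vv
      have hset : (Finset.univ.filter
          (fun j : ↥ψ.internals => RBT.Anc (vv : RBT α) (j : RBT α))) = {vv} := by
        ext j
        simp only [Finset.mem_filter, Finset.mem_univ, true_and, Finset.mem_singleton]
        constructor
        · intro hj
          exact Subtype.ext (hbelow j hj)
        · intro hj; subst hj; exact RBT.mem_subtrees_self' _
      rw [hset, Finset.sum_singleton] at hsum
      -- clade v = {a, b} with a ≠ b
      have hab : a ≠ b := by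
        have hsub := RBT.subtrees_sublist' (RBT.mem_tree_of_mem vv)
        have hnd : (vv : RBT α).leafList.Nodup := hsub.nodup hnodup
        rw [show (vv : RBT α) = v from rfl, hv] at hnd
        simp [RBT.leafList] at hnd
        exact hnd
      have hcard : (vv : RBT α).clade.card = 2 := by
        rw [show (vv : RBT α) = v from rfl, hv]
        simp [RBT.clade, RBT.leafList, hab]
      rw [hcard] at hsum
      have : y vv = y i := by congr 1; exact Subtype.ext hwvv.symm
      omega
    · -- w ≠ v : preimage = {vv} ∪ h̃⁻¹(w)
      have hfil : (Finset.univ.filter fun j : ↥ψ.internals =>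
          (if (j : RBT α) = v then i else ht j) = i)
          = insert vv (Finset.univ.filter fun j : ↥ψ.internals =>
              (j : RBT α) ≠ v ∧ ht j = i) := by
        ext j
        simp only [Finset.mem_filter, Finset.mem_univ, true_and, Finset.mem_insert]
        constructor
        · intro hj
          by_cases hjv : (j : RBT α) = v
          · exact Or.inl (Subtype.ext (by rw [hjv]))
          · rw [if_neg hjv] at hj
            exact Or.inr ⟨hjv, hj⟩
        · rintro (hj | ⟨hj1, hj2⟩)
          · subst hj; simp [vv]
          · rw [if_neg hj1]; exact hj2
      rw [hfil, Finset.card_insert_of_notMem (by simp [vv]),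
        ht_count i hwvv, if_pos rfl]
      omega
  · -- i ≠ w
    by_cases hiv : (i : RBT α) = v
    · -- then y i = 0 and the preimage is empty
      have hfil : (Finset.univ.filter fun j : ↥ψ.internals =>
          (if (j : RBT α) = v then w else ht j) = i) = ∅ := by
        ext j
        simp only [Finset.mem_filter, Finset.mem_univ, true_and, Finset.notMem_empty,
          iff_false]
        intro hj
        by_cases hjv : (j : RBT α) = v
        · rw [if_pos hjv] at hj; exact hiw (hj ▸ rfl)
        · rw [if_neg hjv] at hj
          exact ht_ne j hjv (by rw [hj, hiv])
      rw [hfil, Finset.card_empty]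
      by_contra hy0
      have hpos : 0 < y i := Nat.pos_of_ne_zero (fun hh => hy0 hh.symm)
      have hanc : RBT.Anc (i : RBT α) v := by rw [hiv]; exact RBT.mem_subtrees_self' _
      have := hwmin i hanc hpos
      exact hiw (Subtype.ext (RBT.anc_antisymm' this (hiv ▸ hwv)))
    · -- generic case
      have hfil : (Finset.univ.filter fun j : ↥ψ.internals =>
          (if (j : RBT α) = v then w else ht j) = i)
          = (Finset.univ.filter fun j : ↥ψ.internals =>
            (j : RBT α) ≠ v ∧ ht j = i) := by
        ext j
        simp only [Finset.mem_filter, Finset.mem_univ, true_and]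
        constructor
        · intro hj
          by_cases hjv : (j : RBT α) = v
          · rw [if_pos hjv] at hj; exact absurd (hj ▸ rfl) hiw
          · rw [if_neg hjv] at hj; exact ⟨hjv, hj⟩
        · rintro ⟨hj1, hj2⟩; rw [if_neg hj1]; exact hj2
      rw [hfil, ht_count i hiv, if_neg hiw]
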